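/- The map S defined on generators of G(A,B) by S(u) = D^{-1} A^{-1} u^t A (entrywise as matrices) and S(D^{±1}) = D^{∓1} extends to a well-defined algebra anti-homomorphism S: G(A,B) → G(A,B), and with the standard coalgebra structure it is an antipode, making G(A,B) a Hopf algebra. -/

import Mathlib

open Matrix

/-- Generators of the algebra `G(A,B)`: the `u i j`, `𝔻`, and `𝔻⁻¹`. -/
inductive GABgen (n : ℕ) : Type
  | u : Fin n → Fin n → GABgen n
  | D : GABgen n
  | Dinv : GABgen n

/-- The matrix of generators `u` inside the free algebra. -/
noncomputable def GABu (k : Type*) [Field k] (n : ℕ) :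
    Matrix (Fin n) (Fin n) (FreeAlgebra k (GABgen n)) :=
  fun i j => FreeAlgebra.ι k (GABgen.u i j)

/-- The defining relations of `G(A,B)`: `uᵀ A u = A 𝔻`, `u B uᵀ = B 𝔻`,
`𝔻 𝔻⁻¹ = 1 = 𝔻⁻¹ 𝔻`. -/
inductive GABrel (k : Type*) [Field k] {n : ℕ} (A B : Matrix (Fin n) (Fin n) k) :
    FreeAlgebra k (GABgen n) → FreeAlgebra k (GABgen n) → Prop
  | relA (i j : Fin n) : GABrel k A B
      ((((GABu k n)ᵀ * A.map (algebraMap k (FreeAlgebra k (GABgen n))) * GABu k n)) i j)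
      (algebraMap k (FreeAlgebra k (GABgen n)) (A i j) * FreeAlgebra.ι k GABgen.D)
  | relB (i j : Fin n) : GABrel k A B
      (((GABu k n * B.map (algebraMap k (FreeAlgebra k (GABgen n))) * (GABu k n)ᵀ)) i j)
      (algebraMap k (FreeAlgebra k (GABgen n)) (B i j) * FreeAlgebra.ι k GABgen.D)
  | relD : GABrel k A B (FreeAlgebra.ι k GABgen.D * FreeAlgebra.ι k GABgen.Dinv) 1
  | relD' : GABrel k A B (FreeAlgebra.ι k GABgen.Dinv * FreeAlgebra.ι k GABgen.D) 1

/-- The algebra `G(A,B)`, presented by generators `u i j`, `𝔻`, `𝔻⁻¹` and the relations above. -/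
noncomputable def GAB (k : Type*) [Field k] {n : ℕ} (A B : Matrix (Fin n) (Fin n) k) : Type _ :=
  RingQuot (GABrel k A B)

noncomputable instance (k : Type*) [Field k] {n : ℕ} (A B : Matrix (Fin n) (Fin n) k) :
    Ring (GAB k A B) := by unfold GAB; infer_instance

noncomputable instance (k : Type*) [Field k] {n : ℕ} (A B : Matrix (Fin n) (Fin n) k) :
    Algebra k (GAB k A B) := by unfold GAB; infer_instance

/-- The generators `u i j` of `G(A,B)`. -/
noncomputable def GABU (k : Type*) [Field k] {n : ℕ} (A B : Matrix (Fin n) (Fin n) k)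
    (i j : Fin n) : GAB k A B :=
  RingQuot.mkAlgHom k (GABrel k A B) (FreeAlgebra.ι k (GABgen.u i j))

/-- The generator `𝔻` of `G(A,B)`. -/
noncomputable def GABD (k : Type*) [Field k] {n : ℕ} (A B : Matrix (Fin n) (Fin n) k) :
    GAB k A B :=
  RingQuot.mkAlgHom k (GABrel k A B) (FreeAlgebra.ι k GABgen.D)

/-- The generator `𝔻⁻¹` of `G(A,B)`. -/
noncomputable def GABDinv (k : Type*) [Field k] {n : ℕ} (A B : Matrix (Fin n) (Fin n) k) :
    GAB k A B :=
  RingQuot.mkAlgHom k (GABrel k A B) (FreeAlgebra.ι k GABgen.Dinv)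

open scoped TensorProduct

/-- The matrix of generators of `G(A,B)` regarded as elements of `G(A,B)`. -/
noncomputable def GABumat (k : Type*) [Field k] {n : ℕ} (A B : Matrix (Fin n) (Fin n) k) :
    Matrix (Fin n) (Fin n) (GAB k A B) := fun i j => GABU k A B i j

/-!
Write the relations as matrix identities `uᵀ A u = A 𝔻` and `u B uᵀ = B 𝔻`. Then
`V = 𝔻⁻¹ A⁻¹ uᵀ A` is a left inverse of `u` and `B uᵀ B⁻¹ 𝔻⁻¹` is a right inverse, so the two
agree and `V` is a two-sided inverse of `u`. Consequently `Vᵀ Aᵀ V = Aᵀ 𝔻⁻¹` and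
`V Bᵀ Vᵀ = Bᵀ 𝔻⁻¹`: the triple `(V, 𝔻⁻¹, 𝔻)` satisfies the relations of `G(Aᵀ, Bᵀ)`. Passing to
the opposite algebra, which transposes matrix products, these become the relations of `G(A, B)`
for `(V, 𝔻⁻¹, 𝔻)` in `G(A, B)ᵐᵒᵖ`, so the presentation yields `S`; the antipode equations are
`V u = 1 = u V` and `𝔻 𝔻⁻¹ = 1 = 𝔻⁻¹ 𝔻`.
-/

open MulOpposite

namespace Matrix

variable {k R l m n o : Type*}

theorem transpose_mul_of_commute [NonUnitalSemiring R] [Fintype m] {M : Matrix l m R}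
    {N : Matrix m o R} (h : ∀ i j i' j', Commute (M i j) (N i' j')) : (M * N)ᵀ = Nᵀ * Mᵀ := by
  ext i j
  simp only [transpose_apply, mul_apply]
  exact Finset.sum_congr rfl fun c _ => (h j c c i).eq

theorem commute_map_algebraMap [CommSemiring k] [Semiring R] [Algebra k R] (P : Matrix l m k)
    (M : Matrix n o R) (i j i' j') : Commute (P.map (algebraMap k R) i j) (M i' j') :=
  Algebra.commute_algebraMap_left _ _

variable [Fintype n] [DecidableEq n]

theorem mul_scalar_apply [Semiring R] (M : Matrix m n R) (d : R) (i : m) (j : n) :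
    (M * scalar n d) i j = M i j * d := by
  simp [scalar_apply]

theorem scalar_mul_apply [Semiring R] (d : R) (M : Matrix n m R) (i : n) (j : m) :
    (scalar n d * M) i j = d * M i j := by
  simp [scalar_apply]

theorem transpose_scalar_mul [Semiring R] [Fintype m] [DecidableEq m] (d : R) (M : Matrix n m R) :
    (scalar n d * M)ᵀ = scalar m d * Mᵀ := by
  ext i j
  simp [scalar_apply]

theorem transpose_mul_scalar [Semiring R] [Fintype m] [DecidableEq m] (d : R) (M : Matrix m n R) :
    (M * scalar n d)ᵀ = Mᵀ * scalar m d := by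
  ext i j
  simp [scalar_apply]

section Algebra

variable [CommSemiring k] [Semiring R] [Algebra k R]

theorem scalar_commute_map_algebraMap (d : R) (P : Matrix n n k) :
    Commute (scalar n d) (P.map (algebraMap k R)) := by
  ext i j
  simp [scalar_apply, Algebra.commutes]

end Algebra

variable [CommRing k] [Semiring R] (f : k →+* R) {A : Matrix n n k}

theorem map_nonsing_inv_mul_map (hA : IsUnit A) : A⁻¹.map f * A.map f = 1 := by
  rw [← Matrix.map_mul, nonsing_inv_mul _ ((isUnit_iff_isUnit_det A).mp hA),
    Matrix.map_one _ (map_zero _) (map_one _)]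

theorem map_mul_map_nonsing_inv (hA : IsUnit A) : A.map f * A⁻¹.map f = 1 := by
  rw [← Matrix.map_mul, mul_nonsing_inv _ ((isUnit_iff_isUnit_det A).mp hA),
    Matrix.map_one _ (map_zero _) (map_one _)]

end Matrix

section Solution

variable {k R n : Type*} [Fintype n] [DecidableEq n]

structure IsGABSolution [CommSemiring k] [Semiring R] [Algebra k R] (A B : Matrix n n k)
    (u : Matrix n n R) (d d' : R) : Prop where
  transpose_mul_mul : uᵀ * A.map (algebraMap k R) * u = A.map (algebraMap k R) * scalar n d
  mul_mul_transpose : u * B.map (algebraMap k R) * uᵀ = B.map (algebraMap k R) * scalar n d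
  mul_inv : d * d' = 1
  inv_mul : d' * d = 1

theorem IsGABSolution.map_op [CommSemiring k] [Semiring R] [Algebra k R] {A B : Matrix n n k}
    {u : Matrix n n R} {d d' : R} (h : IsGABSolution Aᵀ Bᵀ u d d') :
    IsGABSolution A B (u.map op) (op d) (op d') := by
  have hu (M : Matrix n n R) : (M.map op).map unop = M := rfl
  have hP (P : Matrix n n k) : (P.map (algebraMap k Rᵐᵒᵖ)).map unop = P.map (algebraMap k R) :=
    rfl
  have hd : (scalar n (op d))ᵀ.map unop = scalar n d := by
    ext i j
    by_cases hij : i = j <;> simp [scalar_apply, hij]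
  -- `RingEquiv.mopMatrix` (transpose, then `unop`) turns products over `Rᵐᵒᵖ` into reversed
  -- products over `R`.
  refine ⟨?_, ?_, unop_injective h.inv_mul, unop_injective h.mul_inv⟩ <;>
    apply RingEquiv.mopMatrix.injective <;> apply unop_injective <;>
    simp only [map_mul, unop_mul, RingEquiv.mopMatrix_apply, unop_op, hu, hP, hd,
      ← transpose_map, transpose_transpose, ← mul_assoc] <;>
    rw [(scalar_commute_map_algebraMap d _).eq]
  exacts [h.transpose_mul_mul, h.mul_mul_transpose]

variable [CommRing k] [Semiring R] [Algebra k R]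

noncomputable def antipodeMatrix (A : Matrix n n k) (d' : R) (u : Matrix n n R) : Matrix n n R :=
  scalar n d' * (A⁻¹.map (algebraMap k R) * uᵀ * A.map (algebraMap k R))

theorem transpose_antipodeMatrix (A : Matrix n n k) (d' : R) (u : Matrix n n R) :
    (antipodeMatrix A d' u)ᵀ =
      scalar n d' * (Aᵀ.map (algebraMap k R) * u * A⁻¹ᵀ.map (algebraMap k R)) := by
  rw [antipodeMatrix, transpose_scalar_mul,
    transpose_mul_of_commute fun _ _ _ _ => (commute_map_algebraMap _ _ _ _ _ _).symm,
    transpose_mul_of_commute (commute_map_algebraMap _ _), transpose_transpose, transpose_map,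
    transpose_map, mul_assoc]

namespace IsGABSolution

variable {A B : Matrix n n k} {u : Matrix n n R} {d d' : R} (h : IsGABSolution A B u d d')
include h

theorem antipodeMatrix_mul (hA : IsUnit A) : antipodeMatrix A d' u * u = 1 :=
  calc antipodeMatrix A d' u * u
      = scalar n d' * A⁻¹.map (algebraMap k R) * (uᵀ * A.map (algebraMap k R) * u) := by
        simp only [antipodeMatrix, mul_assoc]
    _ = scalar n d' * (A⁻¹.map (algebraMap k R) * A.map (algebraMap k R)) * scalar n d := by
        rw [h.transpose_mul_mul]; simp only [mul_assoc]
    _ = 1 := by rw [map_nonsing_inv_mul_map _ hA, mul_one, ← map_mul, h.inv_mul, map_one]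

theorem mul_right_inverse (hB : IsUnit B) :
    u * (B.map (algebraMap k R) * uᵀ * B⁻¹.map (algebraMap k R) * scalar n d') = 1 :=
  calc u * (B.map (algebraMap k R) * uᵀ * B⁻¹.map (algebraMap k R) * scalar n d')
      = u * B.map (algebraMap k R) * uᵀ * B⁻¹.map (algebraMap k R) * scalar n d' := by
        simp only [mul_assoc]
    _ = B.map (algebraMap k R) * (scalar n d * B⁻¹.map (algebraMap k R)) * scalar n d' := by
        rw [h.mul_mul_transpose]; simp only [mul_assoc]
    _ = B.map (algebraMap k R) * B⁻¹.map (algebraMap k R) * (scalar n d * scalar n d') := by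
        rw [(scalar_commute_map_algebraMap d _).eq]; simp only [mul_assoc]
    _ = 1 := by rw [map_mul_map_nonsing_inv _ hB, ← map_mul, h.mul_inv, map_one, mul_one]

theorem antipodeMatrix_eq (hA : IsUnit A) (hB : IsUnit B) :
    antipodeMatrix A d' u = B.map (algebraMap k R) * uᵀ * B⁻¹.map (algebraMap k R) * scalar n d' :=
  left_inv_eq_right_inv (h.antipodeMatrix_mul hA) (h.mul_right_inverse hB)

theorem mul_antipodeMatrix (hA : IsUnit A) (hB : IsUnit B) : u * antipodeMatrix A d' u = 1 := by
  rw [h.antipodeMatrix_eq hA hB]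
  exact h.mul_right_inverse hB

theorem transpose_antipodeMatrix_eq (hA : IsUnit A) (hB : IsUnit B) :
    (antipodeMatrix A d' u)ᵀ =
      B⁻¹ᵀ.map (algebraMap k R) * u * Bᵀ.map (algebraMap k R) * scalar n d' := by
  rw [h.antipodeMatrix_eq hA hB, transpose_mul_scalar,
    transpose_mul_of_commute fun _ _ _ _ => (commute_map_algebraMap _ _ _ _ _ _).symm,
    transpose_mul_of_commute (commute_map_algebraMap _ _), transpose_transpose, transpose_map,
    transpose_map]
  simp only [mul_assoc]

theorem antipode (hA : IsUnit A) (hB : IsUnit B) :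
    IsGABSolution Aᵀ Bᵀ (antipodeMatrix A d' u) d' d where
  transpose_mul_mul :=
    calc (antipodeMatrix A d' u)ᵀ * Aᵀ.map (algebraMap k R) * antipodeMatrix A d' u
        = scalar n d' * Aᵀ.map (algebraMap k R) * u *
            (A⁻¹ᵀ.map (algebraMap k R) * Aᵀ.map (algebraMap k R)) * antipodeMatrix A d' u := by
          rw [transpose_antipodeMatrix]; simp only [mul_assoc]
      _ = scalar n d' * Aᵀ.map (algebraMap k R) * (u * antipodeMatrix A d' u) := by
          rw [transpose_nonsing_inv, map_nonsing_inv_mul_map _ ((isUnit_transpose A).mpr hA),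
            mul_one, mul_assoc]
      _ = Aᵀ.map (algebraMap k R) * scalar n d' := by
          rw [h.mul_antipodeMatrix hA hB, mul_one, (scalar_commute_map_algebraMap d' _).eq]
  mul_mul_transpose :=
    calc antipodeMatrix A d' u * Bᵀ.map (algebraMap k R) * (antipodeMatrix A d' u)ᵀ
        = antipodeMatrix A d' u * (Bᵀ.map (algebraMap k R) * B⁻¹ᵀ.map (algebraMap k R)) * u *
            Bᵀ.map (algebraMap k R) * scalar n d' := by
          rw [h.transpose_antipodeMatrix_eq hA hB]; simp only [mul_assoc]
      _ = Bᵀ.map (algebraMap k R) * scalar n d' := by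
          rw [transpose_nonsing_inv, map_mul_map_nonsing_inv _ ((isUnit_transpose B).mpr hB),
            mul_one, h.antipodeMatrix_mul hA, one_mul]
  mul_inv := h.inv_mul
  inv_mul := h.mul_inv

end IsGABSolution

end Solution

namespace GAB

variable {k R : Type*} [Field k] [Semiring R] [Algebra k R] {n : ℕ} {A B : Matrix (Fin n) (Fin n) k}

def generatorValue (u : Matrix (Fin n) (Fin n) R) (d d' : R) : GABgen n → R
  | .u i j => u i j
  | .D => d
  | .Dinv => d'

theorem map_GABu_lift (u : Matrix (Fin n) (Fin n) R) (d d' : R) :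
    (GABu k n).map (FreeAlgebra.lift k (generatorValue u d d')) = u := by
  ext i j
  simp [GABu, generatorValue]

theorem isGABSolution_map_iff (φ : FreeAlgebra k (GABgen n) →ₐ[k] R) :
    IsGABSolution A B ((GABu k n).map φ) (φ (FreeAlgebra.ι k .D)) (φ (FreeAlgebra.ι k .Dinv)) ↔
      ∀ x y, GABrel k A B x y → φ x = φ y := by
  constructor
  · rintro h _ _ (⟨i, j⟩ | ⟨i, j⟩ | _ | _)
    · have := congr_fun₂ h.transpose_mul_mul i j
      rw [Matrix.mul_scalar_apply] at this
      simpa [mul_apply] using this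
    · have := congr_fun₂ h.mul_mul_transpose i j
      rw [Matrix.mul_scalar_apply] at this
      simpa [mul_apply] using this
    · simpa using h.mul_inv
    · simpa using h.inv_mul
  · intro h
    refine ⟨?_, ?_, ?_, ?_⟩
    · ext i j
      rw [Matrix.mul_scalar_apply]
      simpa [mul_apply] using h _ _ (GABrel.relA i j)
    · ext i j
      rw [Matrix.mul_scalar_apply]
      simpa [mul_apply] using h _ _ (GABrel.relB i j)
    · simpa using h _ _ GABrel.relD
    · simpa using h _ _ GABrel.relD'

variable {u : Matrix (Fin n) (Fin n) R} {d d' : R}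

noncomputable def lift (h : IsGABSolution A B u d d') : GAB k A B →ₐ[k] R :=
  RingQuot.liftAlgHom k ⟨FreeAlgebra.lift k (generatorValue u d d'),
    (isGABSolution_map_iff _).mp (by simpa [map_GABu_lift, generatorValue] using h)⟩

theorem lift_mkAlgHom (h : IsGABSolution A B u d d') (x : FreeAlgebra k (GABgen n)) :
    lift h (RingQuot.mkAlgHom k (GABrel k A B) x) = FreeAlgebra.lift k (generatorValue u d d') x :=
  RingQuot.liftAlgHom_mkAlgHom_apply k _ _ x

theorem lift_U (h : IsGABSolution A B u d d') (i j : Fin n) : lift h (GABU k A B i j) = u i j :=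
  (lift_mkAlgHom h _).trans (FreeAlgebra.lift_ι_apply _ _)

theorem lift_D (h : IsGABSolution A B u d d') : lift h (GABD k A B) = d :=
  (lift_mkAlgHom h _).trans (FreeAlgebra.lift_ι_apply _ _)

theorem lift_Dinv (h : IsGABSolution A B u d d') : lift h (GABDinv k A B) = d' :=
  (lift_mkAlgHom h _).trans (FreeAlgebra.lift_ι_apply _ _)

theorem isGABSolution :
    IsGABSolution A B (GABumat k A B) (GABD k A B) (GABDinv k A B) :=
  (isGABSolution_map_iff _).mpr fun _ _ => RingQuot.mkAlgHom_rel k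

noncomputable def antipode (hA : IsUnit A) (hB : IsUnit B) : GAB k A B →ₐ[k] (GAB k A B)ᵐᵒᵖ :=
  lift (isGABSolution.antipode hA hB).map_op

end GAB

theorem stmt3_general {k : Type*} [Field k] {n : ℕ}
    (A B : Matrix (Fin n) (Fin n) k) (hA : IsUnit A) (hB : IsUnit B) :
    ∃ S : GAB k A B →ₐ[k] (GAB k A B)ᵐᵒᵖ,
      -- values on the generators
      (∀ i j, S (GABU k A B i j) =
        MulOpposite.op (GABDinv k A B *
          ((A⁻¹.map (algebraMap k (GAB k A B)) * (GABumat k A B)ᵀ *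
              A.map (algebraMap k (GAB k A B))) i j))) ∧
      S (GABD k A B) = MulOpposite.op (GABDinv k A B) ∧
      S (GABDinv k A B) = MulOpposite.op (GABD k A B) ∧
      -- the antipode equations on generators: m ∘ (S ⊗ id) ∘ Δ = η ∘ ε = m ∘ (id ⊗ S) ∘ Δ
      (∀ i j, (∑ l, (S (GABU k A B i l)).unop * GABU k A B l j)
          = if i = j then 1 else 0) ∧
      (∀ i j, (∑ l, GABU k A B i l * (S (GABU k A B l j)).unop)
          = if i = j then 1 else 0) ∧
      (S (GABD k A B)).unop * GABD k A B = 1 ∧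
      GABD k A B * (S (GABD k A B)).unop = 1 ∧
      (S (GABDinv k A B)).unop * GABDinv k A B = 1 ∧
      GABDinv k A B * (S (GABDinv k A B)).unop = 1 := by
  have hU i j : (GAB.antipode hA hB (GABU k A B i j)).unop =
      antipodeMatrix A (GABDinv k A B) (GABumat k A B) i j := by
    simp [GAB.antipode, GAB.lift_U]
  refine ⟨GAB.antipode hA hB, fun i j => ?_, GAB.lift_D _, GAB.lift_Dinv _, fun i j => ?_,
    fun i j => ?_, ?_, ?_, ?_, ?_⟩
  · rw [← op_unop (GAB.antipode hA hB _), hU, antipodeMatrix, Matrix.scalar_mul_apply]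
  · simpa only [hU, GABumat, mul_apply, one_apply] using
      congr_fun₂ (GAB.isGABSolution.antipodeMatrix_mul hA) i j
  · simpa only [hU, GABumat, mul_apply, one_apply] using
      congr_fun₂ (GAB.isGABSolution.mul_antipodeMatrix hA hB) i j
  · simpa [GAB.antipode, GAB.lift_D] using GAB.isGABSolution.inv_mul
  · simpa [GAB.antipode, GAB.lift_D] using GAB.isGABSolution.mul_inv
  · simpa [GAB.antipode, GAB.lift_Dinv] using GAB.isGABSolution.mul_inv
  · simpa [GAB.antipode, GAB.lift_Dinv] using GAB.isGABSolution.inv_mul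

/-- The map `S` given on generators by `S(u) = 𝔻⁻¹ A⁻¹ uᵀ A` (entrywise) and
`S(𝔻^{±1}) = 𝔻^{∓1}` extends to a well-defined algebra anti-homomorphism of `G(A,B)`
(an algebra homomorphism `G(A,B) → G(A,B)ᵐᵒᵖ`), and it satisfies the antipode equations
(with respect to the standard coalgebra structure `Δ(u_{ij}) = Σ_l u_{il} ⊗ u_{lj}`,
`Δ(𝔻^{±1}) = 𝔻^{±1} ⊗ 𝔻^{±1}`, `ε(u_{ij}) = δ_{ij}`, `ε(𝔻^{±1}) = 1`) on the generators,
hence `G(A,B)` is a Hopf algebra with antipode `S`. -/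
theorem stmt3 {k : Type*} [Field k] {n : ℕ} (hn : 2 ≤ n)
    (A B : Matrix (Fin n) (Fin n) k) (hA : IsUnit A) (hB : IsUnit B) :
    ∃ S : GAB k A B →ₐ[k] (GAB k A B)ᵐᵒᵖ,
      -- values on the generators
      (∀ i j, S (GABU k A B i j) =
        MulOpposite.op (GABDinv k A B *
          ((A⁻¹.map (algebraMap k (GAB k A B)) * (GABumat k A B)ᵀ *
              A.map (algebraMap k (GAB k A B))) i j))) ∧
      S (GABD k A B) = MulOpposite.op (GABDinv k A B) ∧
      S (GABDinv k A B) = MulOpposite.op (GABD k A B) ∧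
      -- the antipode equations on generators: m ∘ (S ⊗ id) ∘ Δ = η ∘ ε = m ∘ (id ⊗ S) ∘ Δ
      (∀ i j, (∑ l, (S (GABU k A B i l)).unop * GABU k A B l j)
          = if i = j then 1 else 0) ∧
      (∀ i j, (∑ l, GABU k A B i l * (S (GABU k A B l j)).unop)
          = if i = j then 1 else 0) ∧
      (S (GABD k A B)).unop * GABD k A B = 1 ∧
      GABD k A B * (S (GABD k A B)).unop = 1 ∧
      (S (GABDinv k A B)).unop * GABDinv k A B = 1 ∧
      GABDinv k A B * (S (GABDinv k A B)).unop = 1 :=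
  stmt3_general A B hA hB
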